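/- Let f0, f1 be the automatic transformations of the Mealy automaton B_m, with products written so that (f g)(u) = f(g(u)). For m = 3: f1³ = f0 f1² and f1 f0 f1 = f0² f1. For every m ≥ 4 and all integers p₁, …, p_{m−3} ≥ 0, the following equalities of transformations hold: (∏_{i=1}^{m−4} (f1 f0^(p_i))) f1⁴ = (∏_{i=1}^{m−4} (f1 f0^(p_i))) f1 f0 f1², and (∏_{i=1}^{m−3} (f1 f0^(p_i))) f1 f0 f1 = (∏_{i=1}^{m−3} (f1 f0^(p_i))) f0² f1 (empty products denote the identity transformation). -/

import Mathlib

/-- The sequence of states visited by a Mealy automaton with transition function `tr`,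
started at state `q`, while reading the infinite word `u`. -/
def stateSeq {X Q : Type*} (tr : X → Q → Q) (q : Q) (u : ℕ → X) : ℕ → Q
  | 0 => q
  | k + 1 => tr (u k) (stateSeq tr q u k)

/-- The automatic transformation of infinite words defined by the Mealy automaton with
transition function `tr` and output function `out` at the state `q`. -/
def autTrans {X Q : Type*} (tr : X → Q → Q) (out : X → Q → X) (q : Q) (u : ℕ → X) : ℕ → X :=
  fun n => out (u n) (stateSeq tr q u n)

/-- The transformation given by a word of states: the product (composition, applied from
right to left) of the corresponding automatic transformations. -/
def wordTrans {X Q : Type*} (tr : X → Q → Q) (out : X → Q → X) (w : List Q) :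
    (ℕ → X) → (ℕ → X) :=
  (w.map (autTrans tr out)).foldr (· ∘ ·) id

/-- The growth function of a Mealy automaton: `growth tr out n` is the number of distinct
transformations of infinite words obtained as compositions of exactly `n` automatic
transformations of the automaton. -/
noncomputable def growth {X Q : Type*} (tr : X → Q → Q) (out : X → Q → X) (n : ℕ) : ℕ :=
  Set.ncard { g : (ℕ → X) → (ℕ → X) | ∃ w : List Q, w.length = n ∧ wordTrans tr out w = g }

/-- The `i`-th finite difference of a function `γ`. -/
def fdiff (γ : ℕ → ℤ) : ℕ → ℕ → ℤ
  | 0, n => γ n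
  | i + 1, n => fdiff γ i n - fdiff γ i (n - 1)

/-- Output function of the automaton `B_m`: at `q0` the output swaps `x0` and `x1` and fixes
every other letter; at `q1` the output sends `x_i` to `x_{i+1}` for `i ≤ m−2` and fixes
`x_{m−1}`. -/
def bmOut (m : ℕ) : Fin m → Fin 2 → Fin m := fun x q =>
  if q = 0 then
    if (x : ℕ) = 0 then ⟨1 % m, Nat.mod_lt 1 x.pos⟩
    else if (x : ℕ) = 1 then ⟨0, x.pos⟩
    else x
  else ⟨min (x.val + 1) (m - 1), by have := x.pos; omega⟩

/-- Transition function of the automaton `B_m`: from `q0` the transition goes to `q1` on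
reading `x2` and stays at `q0` otherwise; from `q1` it goes to `q0` on reading `x0` and
stays at `q1` otherwise. -/
def bmTr (m : ℕ) : Fin m → Fin 2 → Fin 2 := fun x q =>
  if q = 0 then (if (x : ℕ) = 2 then 1 else 0)
  else (if (x : ℕ) = 0 then 0 else 1)

/-- The automatic transformations `f0, f1` of the automaton `B_m` at states `q0, q1`. -/
def bmF (m : ℕ) (q : Fin 2) : (ℕ → Fin m) → (ℕ → Fin m) := autTrans (bmTr m) (bmOut m) q

/-- The product `∏_{i} (f1 f0^(p_i))` over a list of exponents, composed from right to left;
the empty product is the identity transformation. -/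
def leftProd {α : Type*} (f0 f1 : α → α) : List ℕ → (α → α)
  | [] => id
  | p :: ps => f1 ∘ f0^[p] ∘ leftProd f0 f1 ps

/-!
A composite of automatic transformations is again automatic: a word of states `w` acts as a
single state of the automaton whose states are words, so two words define the same
transformation as soon as they are related by a bisimulation.

Let `W` be the word of `∏ (f1 f0^(p_i))` over `m − 3` blocks. It sends every letter `≥ x3` to
`x_{m−1}` and stays in the same state. Reading a letter, the tails `f1 f0 f1` and `f0 f0 f1`
(or `f1³` and `f0 f1²`) either reach the same state with the same output, or both output a
letter `≥ x3`, or output `x3` against `x2`. In the last case the second copy of `W` reads `x2`,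
so that the `f0^p` of its last block moves to state `q1` and becomes `f1^p`; from then on both
sides saturate every letter they are fed. The four kinds of pairs arising this way form a
bisimulation. The relation for `f1⁴` is the one for `f1³` behind one more block `f1 f0^0`.
-/

lemma leftProd_append_singleton {α : Type*} (f0 f1 : α → α) (ps : List ℕ) (p : ℕ) :
    leftProd f0 f1 (ps ++ [p]) = leftProd f0 f1 ps ∘ f1 ∘ f0^[p] := by
  induction ps with
  | nil => rfl
  | cons q ps ih => rw [List.cons_append, leftProd, leftProd, ih]; rfl

section Mealy

variable {X Q : Type*}

/-- The automaton on words of states: the last state of a word acts first, as in `wordTrans`. -/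
def wordOut (out : X → Q → X) (x : X) (w : List Q) : X :=
  w.foldr (fun q y => out y q) x

def wordTr (tr : X → Q → Q) (out : X → Q → X) (x : X) : List Q → List Q
  | [] => []
  | q :: w => tr (wordOut out x w) q :: wordTr tr out x w

def blockWord (a b : Q) : List ℕ → List Q
  | [] => []
  | p :: ps => b :: List.replicate p a ++ blockWord a b ps

variable (tr : X → Q → Q) (out : X → Q → X)

@[simp] lemma wordOut_nil (x : X) : wordOut out x [] = x := rfl

@[simp] lemma wordOut_cons (x : X) (q : Q) (w : List Q) :
    wordOut out x (q :: w) = out (wordOut out x w) q := rfl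

lemma wordOut_append (x : X) (w₁ w₂ : List Q) :
    wordOut out x (w₁ ++ w₂) = wordOut out (wordOut out x w₂) w₁ :=
  List.foldr_append

@[simp] lemma wordTr_nil (x : X) : wordTr tr out x [] = [] := rfl

@[simp] lemma wordTr_cons (x : X) (q : Q) (w : List Q) :
    wordTr tr out x (q :: w) = tr (wordOut out x w) q :: wordTr tr out x w := rfl

lemma wordTr_append (x : X) (w₁ w₂ : List Q) :
    wordTr tr out x (w₁ ++ w₂) =
      wordTr tr out (wordOut out x w₂) w₁ ++ wordTr tr out x w₂ := by
  induction w₁ with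
  | nil => rfl
  | cons q w ih => simp [ih, wordOut_append]

lemma wordTrans_cons (q : Q) (w : List Q) :
    wordTrans tr out (q :: w) = autTrans tr out q ∘ wordTrans tr out w := rfl

lemma wordTrans_append (w₁ w₂ : List Q) :
    wordTrans tr out (w₁ ++ w₂) = wordTrans tr out w₁ ∘ wordTrans tr out w₂ := by
  induction w₁ with
  | nil => rfl
  | cons q w ih => rw [List.cons_append, wordTrans_cons, wordTrans_cons, ih]; rfl

lemma wordTrans_replicate (q : Q) (n : ℕ) :
    wordTrans tr out (List.replicate n q) = (autTrans tr out q)^[n] := by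
  induction n with
  | zero => rfl
  | succ n ih => rw [List.replicate_succ, wordTrans_cons, ih, Function.iterate_succ']

lemma leftProd_autTrans (a b : Q) (ps : List ℕ) :
    leftProd (autTrans tr out a) (autTrans tr out b) ps =
      wordTrans tr out (blockWord a b ps) := by
  induction ps with
  | nil => rfl
  | cons p ps ih =>
    rw [leftProd, ih, blockWord, List.cons_append, wordTrans_cons, wordTrans_append,
      wordTrans_replicate]

lemma blockWord_append_singleton (a b : Q) (ps : List ℕ) (p : ℕ) :
    blockWord a b (ps ++ [p]) = blockWord a b ps ++ b :: List.replicate p a := by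
  induction ps with
  | nil => simp [blockWord]
  | cons q ps ih => simp [blockWord, ih]

theorem wordTrans_eq_autTrans (w : List Q) :
    wordTrans tr out w = autTrans (wordTr tr out) (wordOut out) w := by
  induction w with
  | nil =>
    funext u n
    have hst : stateSeq (wordTr tr out) [] u n = [] := by
      induction n with
      | zero => rfl
      | succ n ih => simp [stateSeq, ih]
    simp [autTrans, hst, wordTrans]
  | cons q w ih =>
    funext u n
    have hst : ∀ k, stateSeq (wordTr tr out) (q :: w) u k =
        stateSeq tr q (wordTrans tr out w u) k :: stateSeq (wordTr tr out) w u k := by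
      intro k
      induction k with
      | zero => rfl
      | succ k ihk => simp [stateSeq, ihk, ih, autTrans]
    simp [wordTrans_cons, ih, autTrans, hst]

theorem autTrans_eq_of_bisim {R : Q → Q → Prop}
    (hR : ∀ s t, R s t → ∀ x, out x s = out x t ∧ R (tr x s) (tr x t))
    {s t : Q} (h : R s t) : autTrans tr out s = autTrans tr out t := by
  funext u n
  have hst : ∀ k, R (stateSeq tr s u k) (stateSeq tr t u k) := by
    intro k
    induction k with
    | zero => exact h
    | succ k ih => exact (hR _ _ ih (u k)).2
  exact (hR _ _ (hst n) (u n)).1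

end Mealy

section Bm

variable {m : ℕ}

local notation "Out" => wordOut (bmOut m)
local notation "Tr" => wordTr (bmTr m) (bmOut m)

lemma bmOut_one_val (x : Fin m) : (bmOut m x 1).val = min (x.val + 1) (m - 1) := by
  simp [bmOut]

lemma bmOut_zero_of_two_le {x : Fin m} (hx : 2 ≤ x.val) : bmOut m x 0 = x := by
  simp [bmOut, show x.val ≠ 0 by omega, show x.val ≠ 1 by omega]

lemma bmOut_zero_val_of_val_eq_zero {x : Fin m} (hx : x.val = 0) :
    (bmOut m x 0).val = 1 % m := by
  simp [bmOut, hx]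

lemma bmOut_zero_val_of_val_eq_one {x : Fin m} (hx : x.val = 1) : (bmOut m x 0).val = 0 := by
  simp [bmOut, hx]

lemma bmTr_zero (x : Fin m) : bmTr m x 0 = if x.val = 2 then 1 else 0 := by
  simp [bmTr]

lemma bmTr_one (x : Fin m) : bmTr m x 1 = if x.val = 0 then 0 else 1 := by
  simp [bmTr]

lemma wordOut_replicate_zero {x : Fin m} (hx : 2 ≤ x.val) (p : ℕ) :
    Out x (List.replicate p 0) = x := by
  induction p with
  | zero => rfl
  | succ p ih => rw [List.replicate_succ, wordOut_cons, ih, bmOut_zero_of_two_le hx]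

lemma wordTr_replicate_zero {x : Fin m} (hx : 2 ≤ x.val) (p : ℕ) :
    Tr x (List.replicate p 0) = List.replicate p (bmTr m x 0) := by
  induction p with
  | zero => rfl
  | succ p ih => rw [List.replicate_succ, wordTr_cons, ih, wordOut_replicate_zero hx]; rfl

lemma wordOut_replicate_one_val (x : Fin m) (p : ℕ) :
    (Out x (List.replicate p 1)).val = min (x.val + p) (m - 1) := by
  induction p with
  | zero => have := x.isLt; simp only [List.replicate_zero, wordOut_nil, add_zero]; omega
  | succ p ih => rw [List.replicate_succ, wordOut_cons, bmOut_one_val, ih]; omega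

lemma wordTr_replicate_one {x : Fin m} (hx : 1 ≤ x.val) (p : ℕ) :
    Tr x (List.replicate p 1) = List.replicate p 1 := by
  have := x.isLt
  induction p with
  | zero => rfl
  | succ p ih =>
    rw [List.replicate_succ, wordTr_cons, ih, bmTr_one, wordOut_replicate_one_val,
      if_neg (by omega)]

lemma wordOut_blockWord_val {y : Fin m} (hy : 3 ≤ y.val) (ps : List ℕ) :
    (Out y (blockWord 0 1 ps)).val = min (y.val + ps.length) (m - 1) := by
  have := y.isLt
  induction ps with
  | nil => simp [blockWord]; omega
  | cons p ps ih =>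
    rw [blockWord, List.cons_append, wordOut_cons, wordOut_append,
      wordOut_replicate_zero (by omega), bmOut_one_val, ih, List.length_cons]
    omega

lemma wordTr_blockWord {y : Fin m} (hy : 3 ≤ y.val) (ps : List ℕ) :
    Tr y (blockWord 0 1 ps) = blockWord 0 1 ps := by
  have := y.isLt
  induction ps with
  | nil => rfl
  | cons p ps ih =>
    have hbig : 3 ≤ (Out y (blockWord 0 1 ps)).val := by
      rw [wordOut_blockWord_val hy]; omega
    rw [blockWord, List.cons_append, wordTr_cons, wordTr_append, wordOut_append, ih,
      wordTr_replicate_zero (by omega), wordOut_replicate_zero (by omega), bmTr_zero, bmTr_one,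
      if_neg (by omega), if_neg (by omega)]

lemma wordOut_blockWord_append_singleton_val {qs : List ℕ} (hlen : qs.length + 4 = m)
    {z : Fin m} (hz : z.val = 2) (p : ℕ) :
    (Out z (blockWord 0 1 (qs ++ [p]))).val = m - 1 := by
  have hblock : (Out z (1 :: List.replicate p 0)).val = 3 := by
    rw [wordOut_cons, wordOut_replicate_zero (by omega), bmOut_one_val]; omega
  rw [blockWord_append_singleton, wordOut_append, wordOut_blockWord_val (by omega), hblock]
  omega

lemma wordTr_blockWord_append_singleton {qs : List ℕ} (hlen : qs.length + 4 = m)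
    {z : Fin m} (hz : z.val = 2) (p : ℕ) :
    Tr z (blockWord 0 1 (qs ++ [p])) = blockWord 0 1 qs ++ 1 :: List.replicate p 1 := by
  have hblock : (Out z (1 :: List.replicate p 0)).val = 3 := by
    rw [wordOut_cons, wordOut_replicate_zero (by omega), bmOut_one_val]; omega
  rw [blockWord_append_singleton, wordTr_append, wordTr_blockWord (by omega), wordTr_cons,
    wordTr_replicate_zero (by omega), wordOut_replicate_zero (by omega), bmTr_one, bmTr_zero,
    if_pos hz, if_neg (by omega)]

lemma wordOut_blockWord_append_cons_replicate_one_val {qs : List ℕ} (hlen : qs.length + 4 = m)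
    {z : Fin m} (hz : 2 ≤ z.val) (p : ℕ) :
    (Out z (blockWord 0 1 qs ++ 1 :: List.replicate p 1)).val = m - 1 := by
  have hblock := wordOut_replicate_one_val z (p + 1)
  rw [List.replicate_succ] at hblock
  rw [wordOut_append, wordOut_blockWord_val (by omega), hblock]
  omega

lemma wordTr_blockWord_append_cons_replicate_one {qs : List ℕ} (hlen : qs.length + 4 = m)
    {z : Fin m} (hz : 2 ≤ z.val) (p : ℕ) :
    Tr z (blockWord 0 1 qs ++ 1 :: List.replicate p 1) =
      blockWord 0 1 qs ++ 1 :: List.replicate p 1 := by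
  have hblock := wordOut_replicate_one_val z (p + 1)
  rw [List.replicate_succ] at hblock
  rw [← List.replicate_succ, wordTr_append, wordTr_replicate_one (by omega),
    wordTr_blockWord (by rw [List.replicate_succ, hblock]; omega)]

/-- `lastBlock` is the pair reached once the second word has fed `x2` into `blockWord 0 1 ps`,
whose last block `f0^p` has thereby become `f1^p`. -/
inductive BmRel (ps : List ℕ) : List (Fin 2) → List (Fin 2) → Prop
  | refl (s : List (Fin 2)) : BmRel ps s s
  | tail101 : BmRel ps (blockWord 0 1 ps ++ [1, 0, 1]) (blockWord 0 1 ps ++ [0, 0, 1])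
  | tail111 : BmRel ps (blockWord 0 1 ps ++ [1, 1, 1]) (blockWord 0 1 ps ++ [0, 1, 1])
  | lastBlock (qs : List ℕ) (p : ℕ) (c : Fin 2) : ps = qs ++ [p] →
      BmRel ps (blockWord 0 1 ps ++ [1, 1, c])
        (blockWord 0 1 qs ++ 1 :: List.replicate p 1 ++ [1, 1, c])

variable {ps : List ℕ}

lemma wordOut_blockWord_eq_of_three_le (hlen : ps.length + 3 = m) {y z : Fin m}
    (hy : 3 ≤ y.val) (hz : 3 ≤ z.val) : Out y (blockWord 0 1 ps) = Out z (blockWord 0 1 ps) :=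
  Fin.ext (by rw [wordOut_blockWord_val hy, wordOut_blockWord_val hz]; omega)

lemma bmRel_of_diverge (hlen : ps.length + 3 = m) {y z : Fin m} (hy : y.val = min 3 (m - 1))
    (hz : z.val = 2) (c : Fin 2) :
    Out y (blockWord 0 1 ps) = Out z (blockWord 0 1 ps) ∧
      BmRel ps (Tr y (blockWord 0 1 ps) ++ [1, 1, c]) (Tr z (blockWord 0 1 ps) ++ [1, 1, c]) := by
  rcases ps.eq_nil_or_concat' with rfl | ⟨qs, p, rfl⟩
  · obtain rfl : y = z := Fin.ext (by rw [List.length_nil] at hlen; omega)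
    exact ⟨rfl, .refl _⟩
  · simp only [List.length_append, List.length_singleton] at hlen
    refine ⟨Fin.ext ?_, ?_⟩
    · rw [wordOut_blockWord_append_singleton_val (by omega) hz, wordOut_blockWord_val (by omega)]
      simp only [List.length_append, List.length_singleton]
      omega
    · rw [wordTr_blockWord (by omega), wordTr_blockWord_append_singleton (by omega) hz]
      exact .lastBlock qs p c rfl

lemma bmRel_step_tail101 (hlen : ps.length + 3 = m) (x : Fin m) :
    Out x (blockWord 0 1 ps ++ [1, 0, 1]) = Out x (blockWord 0 1 ps ++ [0, 0, 1]) ∧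
      BmRel ps (Tr x (blockWord 0 1 ps ++ [1, 0, 1])) (Tr x (blockWord 0 1 ps ++ [0, 0, 1])) := by
  simp only [wordOut_append, wordTr_append, wordOut_cons, wordOut_nil, wordTr_cons, wordTr_nil]
  have ha := bmOut_one_val x
  rcases Nat.eq_zero_or_pos x.val with hx | hx
  · have hb : (bmOut m (bmOut m x 1) 0).val = 0 := bmOut_zero_val_of_val_eq_one (by omega)
    have hout : bmOut m (bmOut m (bmOut m x 1) 0) 1 = bmOut m (bmOut m (bmOut m x 1) 0) 0 :=
      Fin.ext (by
        rw [bmOut_one_val, bmOut_zero_val_of_val_eq_zero hb, hb, Nat.mod_eq_of_lt (by omega)]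
        omega)
    have htr : bmTr m (bmOut m (bmOut m x 1) 0) 1 = bmTr m (bmOut m (bmOut m x 1) 0) 0 := by
      simp [bmTr_one, bmTr_zero, hb]
    rw [hout, htr]
    exact ⟨rfl, .refl _⟩
  · have hb : bmOut m (bmOut m x 1) 0 = bmOut m x 1 :=
      bmOut_zero_of_two_le (by omega : 2 ≤ (bmOut m x 1).val)
    simp only [hb]
    rcases (show (bmOut m x 1).val = 2 ∨ 3 ≤ (bmOut m x 1).val by omega) with ha2 | ha3
    · simp only [bmTr_one, bmTr_zero, ha2, show x.val ≠ 0 by omega, ↓reduceIte]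
      refine bmRel_of_diverge hlen ?_ ha2 1
      rw [bmOut_one_val]; omega
    · have hy : 3 ≤ (bmOut m (bmOut m x 1) 1).val := by rw [bmOut_one_val]; omega
      simp only [bmTr_one, bmTr_zero, show x.val ≠ 0 by omega,
        show (bmOut m x 1).val ≠ 0 by omega, show (bmOut m x 1).val ≠ 2 by omega, ↓reduceIte]
      rw [wordTr_blockWord hy, wordTr_blockWord ha3]
      exact ⟨wordOut_blockWord_eq_of_three_le hlen hy ha3, .tail101⟩

lemma bmRel_step_tail111 (hlen : ps.length + 3 = m) (x : Fin m) :
    Out x (blockWord 0 1 ps ++ [1, 1, 1]) = Out x (blockWord 0 1 ps ++ [0, 1, 1]) ∧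
      BmRel ps (Tr x (blockWord 0 1 ps ++ [1, 1, 1])) (Tr x (blockWord 0 1 ps ++ [0, 1, 1])) := by
  simp only [wordOut_append, wordTr_append, wordOut_cons, wordOut_nil, wordTr_cons, wordTr_nil]
  have ha := bmOut_one_val x
  have hb := bmOut_one_val (bmOut m x 1)
  have hb0 : bmOut m (bmOut m (bmOut m x 1) 1) 0 = bmOut m (bmOut m x 1) 1 :=
    bmOut_zero_of_two_le (by omega : 2 ≤ (bmOut m (bmOut m x 1) 1).val)
  simp only [hb0, bmTr_one (bmOut m x 1), if_neg (show (bmOut m x 1).val ≠ 0 by omega)]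
  rcases (show (bmOut m (bmOut m x 1) 1).val = 2 ∨ 3 ≤ (bmOut m (bmOut m x 1) 1).val by omega)
    with hb2 | hb3
  · simp only [bmTr_one, bmTr_zero, hb2, ↓reduceIte]
    refine bmRel_of_diverge hlen ?_ hb2 _
    rw [bmOut_one_val]; omega
  · have hy : 3 ≤ (bmOut m (bmOut m (bmOut m x 1) 1) 1).val := by rw [bmOut_one_val]; omega
    simp only [bmTr_one, bmTr_zero, show x.val ≠ 0 by omega,
      show (bmOut m (bmOut m x 1) 1).val ≠ 0 by omega,
      show (bmOut m (bmOut m x 1) 1).val ≠ 2 by omega, ↓reduceIte]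
    rw [wordTr_blockWord hy, wordTr_blockWord hb3]
    exact ⟨wordOut_blockWord_eq_of_three_le hlen hy hb3, .tail111⟩

lemma bmRel_step_lastBlock (hlen : ps.length + 3 = m) {qs : List ℕ} {p : ℕ}
    (hps : ps = qs ++ [p]) (c : Fin 2) (x : Fin m) :
    Out x (blockWord 0 1 ps ++ [1, 1, c]) =
        Out x (blockWord 0 1 qs ++ 1 :: List.replicate p 1 ++ [1, 1, c]) ∧
      BmRel ps (Tr x (blockWord 0 1 ps ++ [1, 1, c]))
        (Tr x (blockWord 0 1 qs ++ 1 :: List.replicate p 1 ++ [1, 1, c])) := by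
  subst hps
  have hq : qs.length + 4 = m := by
    rw [List.length_append, List.length_singleton] at hlen; omega
  rw [wordOut_append _ _ (blockWord 0 1 (qs ++ [p])),
    wordTr_append _ _ _ (blockWord 0 1 (qs ++ [p])),
    wordOut_append _ _ (blockWord 0 1 qs ++ 1 :: List.replicate p 1),
    wordTr_append _ _ _ (blockWord 0 1 qs ++ 1 :: List.replicate p 1)]
  simp only [wordOut_cons, wordOut_nil, wordTr_cons, wordTr_nil]
  have hb := bmOut_one_val (bmOut m x c)
  have hb' := bmOut_one_val (bmOut m (bmOut m x c) 1)
  rcases (show (bmOut m (bmOut m (bmOut m x c) 1) 1).val = 2 ∨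
      3 ≤ (bmOut m (bmOut m (bmOut m x c) 1) 1).val by omega) with h2 | h3
  · refine ⟨Fin.ext ?_, ?_⟩
    · rw [wordOut_blockWord_append_singleton_val hq h2,
        wordOut_blockWord_append_cons_replicate_one_val hq (by omega)]
    · rw [wordTr_blockWord_append_singleton hq h2,
        wordTr_blockWord_append_cons_replicate_one hq (by omega)]
      exact .refl _
  · refine ⟨Fin.ext ?_, ?_⟩
    · rw [wordOut_blockWord_val h3, wordOut_blockWord_append_cons_replicate_one_val hq (by omega)]
      simp only [List.length_append, List.length_singleton]; omega
    · rw [wordTr_blockWord h3, wordTr_blockWord_append_cons_replicate_one hq (by omega)]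
      simp only [bmTr_one, show (bmOut m x c).val ≠ 0 by omega,
        show (bmOut m (bmOut m x c) 1).val ≠ 0 by omega, ↓reduceIte]
      exact .lastBlock qs p _ rfl

theorem BmRel.step (hlen : ps.length + 3 = m) {s t : List (Fin 2)} (h : BmRel ps s t)
    (x : Fin m) :
    Out x s = Out x t ∧
      BmRel ps (Tr x s) (Tr x t) := by
  cases h with
  | refl => exact ⟨rfl, .refl _⟩
  | tail101 => exact bmRel_step_tail101 hlen x
  | tail111 => exact bmRel_step_tail111 hlen x
  | lastBlock qs p c hps => exact bmRel_step_lastBlock hlen hps c x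

theorem wordTrans_eq_of_bmRel (hlen : ps.length + 3 = m) {s t : List (Fin 2)}
    (h : BmRel ps s t) : wordTrans (bmTr m) (bmOut m) s = wordTrans (bmTr m) (bmOut m) t := by
  rw [wordTrans_eq_autTrans, wordTrans_eq_autTrans]
  exact autTrans_eq_of_bisim _ _ (fun _ _ hst => hst.step hlen) h

theorem leftProd_comp_bmF_one_zero_one (hlen : ps.length + 3 = m) :
    leftProd (bmF m 0) (bmF m 1) ps ∘ bmF m 1 ∘ bmF m 0 ∘ bmF m 1 =
      leftProd (bmF m 0) (bmF m 1) ps ∘ bmF m 0 ∘ bmF m 0 ∘ bmF m 1 := by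
  have h := wordTrans_eq_of_bmRel hlen BmRel.tail101
  rw [wordTrans_append, wordTrans_append, ← leftProd_autTrans] at h
  exact h

theorem leftProd_comp_bmF_one_one_one (hlen : ps.length + 3 = m) :
    leftProd (bmF m 0) (bmF m 1) ps ∘ bmF m 1 ∘ bmF m 1 ∘ bmF m 1 =
      leftProd (bmF m 0) (bmF m 1) ps ∘ bmF m 0 ∘ bmF m 1 ∘ bmF m 1 := by
  have h := wordTrans_eq_of_bmRel hlen BmRel.tail111
  rw [wordTrans_append, wordTrans_append, ← leftProd_autTrans] at h
  exact h

end Bm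

/-- The defining relations of the semigroups `S_{B_m}` hold among the automatic
transformations `f0, f1` of `B_m`: for `m = 3`, `f1³ = f0 f1²` and `f1 f0 f1 = f0² f1`;
for every `m ≥ 4` and all exponents `p_i ≥ 0`,
`(∏_{i=1}^{m−4} (f1 f0^(p_i))) f1⁴ = (∏_{i=1}^{m−4} (f1 f0^(p_i))) f1 f0 f1²` and
`(∏_{i=1}^{m−3} (f1 f0^(p_i))) f1 f0 f1 = (∏_{i=1}^{m−3} (f1 f0^(p_i))) f0² f1`. -/
theorem relations_bm :
    (bmF 3 1 ∘ bmF 3 1 ∘ bmF 3 1 = bmF 3 0 ∘ bmF 3 1 ∘ bmF 3 1 ∧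
     bmF 3 1 ∘ bmF 3 0 ∘ bmF 3 1 = bmF 3 0 ∘ bmF 3 0 ∘ bmF 3 1) ∧
    ∀ m : ℕ, 4 ≤ m →
      (∀ ps : List ℕ, ps.length = m - 4 →
        leftProd (bmF m 0) (bmF m 1) ps ∘ (bmF m 1)^[4] =
          leftProd (bmF m 0) (bmF m 1) ps ∘ bmF m 1 ∘ bmF m 0 ∘ (bmF m 1)^[2]) ∧
      (∀ ps : List ℕ, ps.length = m - 3 →
        leftProd (bmF m 0) (bmF m 1) ps ∘ bmF m 1 ∘ bmF m 0 ∘ bmF m 1 =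
          leftProd (bmF m 0) (bmF m 1) ps ∘ bmF m 0 ∘ bmF m 0 ∘ bmF m 1) := by
  refine ⟨⟨leftProd_comp_bmF_one_one_one (ps := []) rfl,
      leftProd_comp_bmF_one_zero_one (ps := []) rfl⟩,
    fun m hm => ⟨fun ps hps => ?_, fun ps hps => leftProd_comp_bmF_one_zero_one (by omega)⟩⟩
  have h := leftProd_comp_bmF_one_one_one (m := m) (ps := ps ++ [0])
    (by rw [List.length_append, List.length_singleton]; omega)
  rw [leftProd_append_singleton] at h
  exact h
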